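/- Let (θ₁, φ₁), (θ₂, φ₂), (θ₃, φ₃) be independent, each uniformly distributed on [0,2π]², and set hᵢ := sin θᵢ·sin φᵢ. Fix a real number a and a natural number n_R ≥ 1, and define G₁ := Σ_{s=1}^{n_R−1} (n_R − s)·cos(s·a·(h₁ − h₃)) and G₂ := Σ_{s=1}^{n_R−1} (n_R − s)·cos(s·a·(h₂ − h₃)). Then the covariance E[G₁·G₂] − E[G₁]·E[G₂] equals Σ_{s₂=1}^{n_R−1} Σ_{s₁=1}^{n_R−1} (n_R − s₁)(n_R − s₂)·(J₀(s₁·a/2)²·J₀(s₂·a/2)²/2)·(J₀((s₁ + s₂)·a/2)² + J₀(|s₁ − s₂|·a/2)²) − (Σ_{s=1}^{n_R−1} (n_R − s)·J₀(s·a/2)⁴)². -/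

import Mathlib

open Real MeasureTheory Finset

/-- Bessel function of the first kind of order zero (integral representation). -/
noncomputable def J₀ (x : ℝ) : ℝ :=
  (1 / (2 * π)) * ∫ t in (0:ℝ)..(2 * π), Real.cos (x * Real.sin t)

/-- Expectation over three independent pairs of angles, each uniform on `[0, 2π]²`. -/
noncomputable def E6 (f : ℝ → ℝ → ℝ → ℝ → ℝ → ℝ → ℝ) : ℝ :=
  (1 / (2 * π) ^ 6) *
    ∫ θ₁ in (0:ℝ)..(2 * π), ∫ φ₁ in (0:ℝ)..(2 * π),
      ∫ θ₂ in (0:ℝ)..(2 * π), ∫ φ₂ in (0:ℝ)..(2 * π),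
        ∫ θ₃ in (0:ℝ)..(2 * π), ∫ φ₃ in (0:ℝ)..(2 * π), f θ₁ φ₁ θ₂ φ₂ θ₃ φ₃

/-! The mean of `cos (c * h + d)` over `h = sin θ * sin φ`, with `(θ, φ)` uniform on `[0, 2π]²`,
is `J₀ (c / 2) ^ 2 * cos d`: since `c sin θ sin φ = (c/2) cos (θ - φ) - (c/2) cos (θ + φ)`, the
mean of `cos (c sin θ sin φ)` splits into torus means of products `f (θ - φ) * g (θ + φ)`, which
factorise, and the sine terms vanish by antiperiodicity. Averaging first over `h₃` with the
product-to-sum formula, then over `h₂` and `h₁`, evaluates every term of `E[G₁ G₂]` and `E[Gᵢ]`. -/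

open Function intervalIntegral

theorem Function.Periodic.intervalIntegral_comp_add_right {f : ℝ → ℝ} {T : ℝ}
    (hf : Periodic f T) (d : ℝ) : ∫ x in 0..T, f (x + d) = ∫ x in 0..T, f x := by
  rw [integral_comp_add_right, show T + d = d + T by ring]
  simpa using hf.intervalIntegral_add_eq d 0

theorem Function.Antiperiodic.intervalIntegral_eq_zero {f : ℝ → ℝ} {c : ℝ}
    (hf : Antiperiodic f c) : ∫ x in 0..2 * c, f x = 0 := by
  have h := hf.periodic_two_mul.intervalIntegral_comp_add_right c
  simp only [hf _, intervalIntegral.integral_neg] at h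
  linarith

theorem integral_integral_comp_sub_mul_comp_add {f g : ℝ → ℝ} {T : ℝ}
    (hf : Periodic f T) (hg : Periodic g T) (hfc : Continuous f) (hgc : Continuous g) :
    ∫ θ in 0..T, ∫ φ in 0..T, f (θ - φ) * g (θ + φ) =
      (∫ x in 0..T, f x) * ∫ x in 0..T, g x := by
  have inner (θ : ℝ) :
      ∫ φ in 0..T, f (θ - φ) * g (θ + φ) = ∫ ψ in 0..T, f ψ * g (2 * θ - ψ) := by
    have hper : Periodic (fun ψ => f ψ * g (2 * θ - ψ)) T := fun ψ => by
      simp only [hf ψ, sub_add_eq_sub_sub, hg.sub_eq]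
    calc ∫ φ in 0..T, f (θ - φ) * g (θ + φ)
        = ∫ φ in 0..T, f (θ - φ) * g (2 * θ - (θ - φ)) := by ring_nf
      _ = ∫ ψ in θ - T..θ, f ψ * g (2 * θ - ψ) := by
        simpa using integral_comp_sub_left (a := 0) (b := T) (fun ψ => f ψ * g (2 * θ - ψ)) θ
      _ = ∫ ψ in 0..T, f ψ * g (2 * θ - ψ) := by
        simpa using hper.intervalIntegral_add_eq (θ - T) 0
  have outer (ψ : ℝ) : ∫ θ in 0..T, g (2 * θ - ψ) = ∫ x in 0..T, g x := by
    have h2 := hg.intervalIntegral_add_zsmul_eq 2 (-ψ) fun _ _ => hgc.intervalIntegrable _ _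
    rw [hg.intervalIntegral_add_eq (-ψ) 0, zero_add] at h2
    rw [integral_comp_mul_sub g two_ne_zero, mul_zero, zero_sub,
      show 2 * T - ψ = -ψ + (2 : ℤ) • T by rw [two_zsmul]; ring, h2]
    simp
  have hcont : Continuous (uncurry fun ψ θ => f ψ * g (2 * θ - ψ)) := by fun_prop
  calc ∫ θ in 0..T, ∫ φ in 0..T, f (θ - φ) * g (θ + φ)
      = ∫ θ in 0..T, ∫ ψ in 0..T, f ψ * g (2 * θ - ψ) := by simp only [inner]
    _ = ∫ ψ in 0..T, ∫ θ in 0..T, f ψ * g (2 * θ - ψ) := by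
      refine (intervalIntegral_intervalIntegral_swap ?_).symm
      exact (hcont.continuousOn.integrableOn_compact (isCompact_uIcc.prod isCompact_uIcc)).mono_set
        (Set.prod_mono Set.uIoc_subset_uIcc Set.uIoc_subset_uIcc)
    _ = ∫ ψ in 0..T, f ψ * ∫ x in 0..T, g x := by
      simp only [intervalIntegral.integral_const_mul, outer]
    _ = (∫ x in 0..T, f x) * ∫ x in 0..T, g x := integral_mul_const _ _

theorem J₀_neg (x : ℝ) : J₀ (-x) = J₀ x := by
  simp only [J₀, neg_mul, Real.cos_neg]

theorem integral_cos_mul_cos (x : ℝ) :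
    ∫ t in 0..2 * π, cos (x * cos t) = 2 * π * J₀ x := by
  have hper : Periodic (fun t => cos (x * cos t)) (2 * π) := fun t => by simp
  rw [J₀, ← hper.intervalIntegral_comp_add_right (π / 2)]
  simp only [cos_add_pi_div_two, mul_neg, cos_neg]
  field_simp

theorem integral_sin_mul_cos (x : ℝ) : ∫ t in 0..2 * π, sin (x * cos t) = 0 :=
  Antiperiodic.intervalIntegral_eq_zero fun t => by simp [cos_add_pi]

theorem integral_sin_mul_sin (x : ℝ) : ∫ t in 0..2 * π, sin (x * sin t) = 0 :=
  Antiperiodic.intervalIntegral_eq_zero fun t => by simp [sin_add_pi]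

theorem intervalIntegral_integral_add {f g : ℝ → ℝ → ℝ} (hf : Continuous (uncurry f))
    (hg : Continuous (uncurry g)) (a b c d : ℝ) :
    ∫ x in a..b, ∫ y in c..d, (f x y + g x y) =
      (∫ x in a..b, ∫ y in c..d, f x y) + ∫ x in a..b, ∫ y in c..d, g x y := by
  have hf' (x : ℝ) : Continuous (f x) := hf.comp (Continuous.prodMk_right x)
  have hg' (x : ℝ) : Continuous (g x) := hg.comp (Continuous.prodMk_right x)
  rw [integral_congr fun x _ => integral_add ((hf' x).intervalIntegrable c d)
    ((hg' x).intervalIntegrable c d)]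
  exact integral_add
    ((continuous_parametric_intervalIntegral_of_continuous' hf c d).intervalIntegrable a b)
    ((continuous_parametric_intervalIntegral_of_continuous' hg c d).intervalIntegrable a b)

theorem integral_integral_cos_mul_sin_mul_sin (c : ℝ) :
    ∫ θ in 0..2 * π, ∫ φ in 0..2 * π, cos (c * (sin θ * sin φ)) = (2 * π * J₀ (c / 2)) ^ 2 := by
  set f₁ : ℝ → ℝ := fun t => cos (c / 2 * cos t)
  set f₂ : ℝ → ℝ := fun t => sin (c / 2 * cos t)
  have h₁ : Periodic f₁ (2 * π) := fun t => by simp [f₁]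
  have h₂ : Periodic f₂ (2 * π) := fun t => by simp [f₂]
  have hsplit (θ φ : ℝ) :
      cos (c * (sin θ * sin φ)) = f₁ (θ - φ) * f₁ (θ + φ) + f₂ (θ - φ) * f₂ (θ + φ) := by
    rw [show c * (sin θ * sin φ) = c / 2 * cos (θ - φ) - c / 2 * cos (θ + φ) by
      rw [cos_sub, cos_add]; ring, cos_sub]
  simp only [hsplit]
  rw [intervalIntegral_integral_add (by fun_prop) (by fun_prop),
    integral_integral_comp_sub_mul_comp_add h₁ h₁ (by fun_prop) (by fun_prop),
    integral_integral_comp_sub_mul_comp_add h₂ h₂ (by fun_prop) (by fun_prop)]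
  simp only [f₁, f₂, integral_cos_mul_cos, integral_sin_mul_cos]
  ring

noncomputable def sinProdMean (g : ℝ → ℝ) : ℝ :=
  1 / (2 * π) ^ 2 * ∫ θ in 0..2 * π, ∫ φ in 0..2 * π, g (sin θ * sin φ)

theorem sinProdMean_const_mul (c : ℝ) (g : ℝ → ℝ) :
    sinProdMean (fun h => c * g h) = c * sinProdMean g := by
  simp only [sinProdMean, intervalIntegral.integral_const_mul]
  ring

theorem sinProdMean_const (c : ℝ) : sinProdMean (fun _ => c) = c := by
  simp only [sinProdMean, intervalIntegral.integral_const, smul_eq_mul, sub_zero]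
  field_simp

theorem sinProdMean_add {f g : ℝ → ℝ} (hf : Continuous f) (hg : Continuous g) :
    sinProdMean (fun h => f h + g h) = sinProdMean f + sinProdMean g := by
  simp only [sinProdMean]
  rw [intervalIntegral_integral_add (by fun_prop) (by fun_prop)]
  ring

theorem sinProdMean_finset_sum {ι : Type*} (s : Finset ι) {g : ι → ℝ → ℝ}
    (hg : ∀ i, Continuous (g i)) :
    sinProdMean (fun h => ∑ i ∈ s, g i h) = ∑ i ∈ s, sinProdMean (g i) := by
  classical
  induction s using Finset.induction_on with
  | empty => simpa using sinProdMean_const 0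
  | insert i s hi ih =>
    simp only [Finset.sum_insert hi]
    rw [sinProdMean_add (hg i) (continuous_finsetSum _ fun j _ => hg j), ih]

theorem continuous_sinProdMean {X : Type*} [TopologicalSpace X] {G : X → ℝ → ℝ}
    (hG : Continuous (uncurry G)) : Continuous fun x => sinProdMean (G x) := by
  refine continuous_const.mul ?_
  refine continuous_parametric_intervalIntegral_of_continuous' ?_ _ _
  refine continuous_parametric_intervalIntegral_of_continuous' ?_ _ _
  exact hG.comp (f := fun q : (X × ℝ) × ℝ => (q.1.1, sin q.1.2 * sin q.2)) (by fun_prop)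

theorem sinProdMean_cos_mul (c : ℝ) : sinProdMean (fun h => cos (c * h)) = J₀ (c / 2) ^ 2 := by
  rw [sinProdMean, integral_integral_cos_mul_sin_mul_sin]
  field_simp

theorem sinProdMean_sin_mul (c : ℝ) : sinProdMean (fun h => sin (c * h)) = 0 := by
  simp only [sinProdMean, ← mul_assoc, integral_sin_mul_sin, intervalIntegral.integral_zero,
    mul_zero]

theorem sinProdMean_cos_mul_add (c d : ℝ) :
    sinProdMean (fun h => cos (c * h + d)) = J₀ (c / 2) ^ 2 * cos d := by
  have hexpand (h : ℝ) : cos (c * h + d) = cos d * cos (c * h) + -sin d * sin (c * h) := by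
    rw [cos_add]; ring
  simp only [hexpand]
  rw [sinProdMean_add (by fun_prop) (by fun_prop), sinProdMean_const_mul, sinProdMean_const_mul,
    sinProdMean_cos_mul, sinProdMean_sin_mul]
  ring

theorem sinProdMean_cos_mul_add_mul_cos_mul_add (c₁ d₁ c₂ d₂ : ℝ) :
    sinProdMean (fun h => cos (c₁ * h + d₁) * cos (c₂ * h + d₂)) =
      (J₀ ((c₁ - c₂) / 2) ^ 2 * cos (d₁ - d₂) + J₀ ((c₁ + c₂) / 2) ^ 2 * cos (d₁ + d₂)) / 2 := by
  have hprod (h : ℝ) : cos (c₁ * h + d₁) * cos (c₂ * h + d₂) =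
      1 / 2 * (cos ((c₁ - c₂) * h + (d₁ - d₂)) + cos ((c₁ + c₂) * h + (d₁ + d₂))) := by
    rw [show (c₁ - c₂) * h + (d₁ - d₂) = (c₁ * h + d₁) - (c₂ * h + d₂) by ring,
      show (c₁ + c₂) * h + (d₁ + d₂) = (c₁ * h + d₁) + (c₂ * h + d₂) by ring]
    rw [cos_sub (c₁ * h + d₁), cos_add (c₁ * h + d₁)]
    ring
  simp only [hprod]
  rw [sinProdMean_const_mul, sinProdMean_add (by fun_prop) (by fun_prop),
    sinProdMean_cos_mul_add, sinProdMean_cos_mul_add]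
  ring

theorem sinProdMean_cos_mul_sub (c x : ℝ) :
    sinProdMean (fun h => cos (c * (x - h))) = J₀ (c / 2) ^ 2 * cos (c * x) := by
  have key := sinProdMean_cos_mul_add (-c) (c * x)
  rw [neg_div, J₀_neg] at key
  rw [← key]
  congr 1
  funext h
  ring_nf

theorem sinProdMean_cos_mul_sub_mul_cos_mul_sub (c₁ c₂ x₁ x₂ : ℝ) :
    sinProdMean (fun h => cos (c₁ * (x₁ - h)) * cos (c₂ * (x₂ - h))) =
      (J₀ ((c₁ - c₂) / 2) ^ 2 * cos (c₁ * x₁ - c₂ * x₂) +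
        J₀ ((c₁ + c₂) / 2) ^ 2 * cos (c₁ * x₁ + c₂ * x₂)) / 2 := by
  have key := sinProdMean_cos_mul_add_mul_cos_mul_add (-c₁) (c₁ * x₁) (-c₂) (c₂ * x₂)
  rw [show (-c₁ - -c₂) / 2 = -((c₁ - c₂) / 2) by ring,
    show (-c₁ + -c₂) / 2 = -((c₁ + c₂) / 2) by ring, J₀_neg, J₀_neg] at key
  rw [← key]
  congr 1
  funext h
  ring_nf

noncomputable def sinProdMean₃ (F : ℝ → ℝ → ℝ → ℝ) : ℝ :=
  sinProdMean fun h₁ => sinProdMean fun h₂ => sinProdMean fun h₃ => F h₁ h₂ h₃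

theorem E6_eq_sinProdMean₃ (F : ℝ → ℝ → ℝ → ℝ) :
    E6 (fun θ₁ φ₁ θ₂ φ₂ θ₃ φ₃ => F (sin θ₁ * sin φ₁) (sin θ₂ * sin φ₂) (sin θ₃ * sin φ₃)) =
      sinProdMean₃ F := by
  simp only [E6, sinProdMean₃, sinProdMean, intervalIntegral.integral_const_mul]
  ring

theorem sinProdMean₃_const_mul (c : ℝ) (F : ℝ → ℝ → ℝ → ℝ) :
    sinProdMean₃ (fun h₁ h₂ h₃ => c * F h₁ h₂ h₃) = c * sinProdMean₃ F := by
  simp only [sinProdMean₃, sinProdMean_const_mul]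

theorem sinProdMean₃_finset_sum {ι : Type*} (s : Finset ι) {F : ι → ℝ → ℝ → ℝ → ℝ}
    (hF : ∀ i, Continuous fun p : ℝ × ℝ × ℝ => F i p.1 p.2.1 p.2.2) :
    sinProdMean₃ (fun h₁ h₂ h₃ => ∑ i ∈ s, F i h₁ h₂ h₃) = ∑ i ∈ s, sinProdMean₃ (F i) := by
  have hcont₃ (i : ι) (h₁ h₂ : ℝ) : Continuous (F i h₁ h₂) :=
    (hF i).comp (f := fun h₃ => (h₁, h₂, h₃)) (by fun_prop)
  have hcont₂₃ (i : ι) : Continuous fun p : ℝ × ℝ => sinProdMean (F i p.1 p.2) :=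
    continuous_sinProdMean (G := fun p : ℝ × ℝ => F i p.1 p.2)
      ((hF i).comp (f := fun q : (ℝ × ℝ) × ℝ => (q.1.1, q.1.2, q.2)) (by fun_prop))
  have hcont₁₂₃ (i : ι) (h₁ : ℝ) : Continuous fun h₂ => sinProdMean (F i h₁ h₂) :=
    (hcont₂₃ i).comp (f := fun h₂ => (h₁, h₂)) (by fun_prop)
  simp only [sinProdMean₃, sinProdMean_finset_sum _ fun i => hcont₃ i _ _,
    sinProdMean_finset_sum _ fun i => hcont₁₂₃ i _]
  exact sinProdMean_finset_sum _ fun i =>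
    continuous_sinProdMean (G := fun h₁ h₂ => sinProdMean (F i h₁ h₂)) (hcont₂₃ i)

theorem sinProdMean₃_cos_mul_sub_left (c : ℝ) :
    sinProdMean₃ (fun h₁ _ h₃ => cos (c * (h₁ - h₃))) = J₀ (c / 2) ^ 4 := by
  simp only [sinProdMean₃, sinProdMean_cos_mul_sub, sinProdMean_const, sinProdMean_const_mul,
    sinProdMean_cos_mul]
  ring

theorem sinProdMean₃_cos_mul_sub_mid (c : ℝ) :
    sinProdMean₃ (fun _ h₂ h₃ => cos (c * (h₂ - h₃))) = J₀ (c / 2) ^ 4 := by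
  simp only [sinProdMean₃, sinProdMean_cos_mul_sub, sinProdMean_const_mul, sinProdMean_cos_mul,
    sinProdMean_const]
  ring

theorem sinProdMean₃_cos_mul_sub_mul_cos_mul_sub (c₁ c₂ : ℝ) :
    sinProdMean₃ (fun h₁ h₂ h₃ => cos (c₁ * (h₁ - h₃)) * cos (c₂ * (h₂ - h₃))) =
      J₀ (c₁ / 2) ^ 2 * J₀ (c₂ / 2) ^ 2 / 2 *
        (J₀ ((c₁ + c₂) / 2) ^ 2 + J₀ ((c₁ - c₂) / 2) ^ 2) := by
  have hmid (P Q h₁ : ℝ) :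
      sinProdMean (fun h₂ => (P * cos (c₁ * h₁ - c₂ * h₂) + Q * cos (c₁ * h₁ + c₂ * h₂)) / 2) =
        (P + Q) / 2 * J₀ (c₂ / 2) ^ 2 * cos (c₁ * h₁) := by
    have hexpand (h₂ : ℝ) : (P * cos (c₁ * h₁ - c₂ * h₂) + Q * cos (c₁ * h₁ + c₂ * h₂)) / 2 =
        1 / 2 * (P * cos (-c₂ * h₂ + c₁ * h₁) + Q * cos (c₂ * h₂ + c₁ * h₁)) := by
      ring_nf
    simp only [hexpand]
    rw [sinProdMean_const_mul, sinProdMean_add (by fun_prop) (by fun_prop),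
      sinProdMean_const_mul, sinProdMean_const_mul, sinProdMean_cos_mul_add,
      sinProdMean_cos_mul_add, neg_div, J₀_neg]
    ring
  simp only [sinProdMean₃, sinProdMean_cos_mul_sub_mul_cos_mul_sub, hmid, sinProdMean_const_mul,
    sinProdMean_cos_mul]
  ring

theorem stmt_11_general (a : ℝ) (nR : ℕ) :
    E6 (fun θ₁ φ₁ θ₂ φ₂ θ₃ φ₃ =>
      (∑ s ∈ Finset.Icc 1 (nR - 1), ((nR : ℝ) - s) *
        Real.cos ((s : ℝ) * a *
          (Real.sin θ₁ * Real.sin φ₁ - Real.sin θ₃ * Real.sin φ₃))) *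
      (∑ s ∈ Finset.Icc 1 (nR - 1), ((nR : ℝ) - s) *
        Real.cos ((s : ℝ) * a *
          (Real.sin θ₂ * Real.sin φ₂ - Real.sin θ₃ * Real.sin φ₃)))) -
    E6 (fun θ₁ φ₁ _θ₂ _φ₂ θ₃ φ₃ =>
      ∑ s ∈ Finset.Icc 1 (nR - 1), ((nR : ℝ) - s) *
        Real.cos ((s : ℝ) * a *
          (Real.sin θ₁ * Real.sin φ₁ - Real.sin θ₃ * Real.sin φ₃))) *
    E6 (fun _θ₁ _φ₁ θ₂ φ₂ θ₃ φ₃ =>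
      ∑ s ∈ Finset.Icc 1 (nR - 1), ((nR : ℝ) - s) *
        Real.cos ((s : ℝ) * a *
          (Real.sin θ₂ * Real.sin φ₂ - Real.sin θ₃ * Real.sin φ₃)))
    = (∑ s₂ ∈ Finset.Icc 1 (nR - 1), ∑ s₁ ∈ Finset.Icc 1 (nR - 1),
        ((nR : ℝ) - s₁) * ((nR : ℝ) - s₂) *
          ((J₀ ((s₁ : ℝ) * a / 2)) ^ 2 * (J₀ ((s₂ : ℝ) * a / 2)) ^ 2 / 2) *
          ((J₀ (((s₁ : ℝ) + (s₂ : ℝ)) * a / 2)) ^ 2 +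
           (J₀ (|(s₁ : ℝ) - (s₂ : ℝ)| * a / 2)) ^ 2)) -
      (∑ s ∈ Finset.Icc 1 (nR - 1), ((nR : ℝ) - s) * (J₀ ((s : ℝ) * a / 2)) ^ 4) ^ 2 := by
  set S := Finset.Icc 1 (nR - 1)
  have hJ₀ (d : ℝ) : J₀ (|d| * a / 2) = J₀ (d * a / 2) := by
    rcases abs_choice d with h | h <;> simp only [h, neg_mul, neg_div, J₀_neg]
  have hprod (x y : ℝ) :
      (∑ s ∈ S, ((nR : ℝ) - s) * cos (s * a * x)) * (∑ s ∈ S, ((nR : ℝ) - s) * cos (s * a * y)) =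
        ∑ s₂ ∈ S, ∑ s₁ ∈ S, ((nR : ℝ) - s₁) * ((nR : ℝ) - s₂) *
          (cos (s₁ * a * x) * cos (s₂ * a * y)) := by
    rw [sum_mul_sum, sum_comm]
    simp only [mul_mul_mul_comm]
  rw [E6_eq_sinProdMean₃ fun h₁ h₂ h₃ => (∑ s ∈ S, ((nR : ℝ) - s) * cos (s * a * (h₁ - h₃))) *
      ∑ s ∈ S, ((nR : ℝ) - s) * cos (s * a * (h₂ - h₃)),
    E6_eq_sinProdMean₃ fun h₁ _ h₃ => ∑ s ∈ S, ((nR : ℝ) - s) * cos (s * a * (h₁ - h₃)),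
    E6_eq_sinProdMean₃ fun _ h₂ h₃ => ∑ s ∈ S, ((nR : ℝ) - s) * cos (s * a * (h₂ - h₃))]
  simp only [hprod]
  simp (disch := (intro; fun_prop)) only [sinProdMean₃_finset_sum]
  simp only [sinProdMean₃_const_mul, sinProdMean₃_cos_mul_sub_mul_cos_mul_sub,
    sinProdMean₃_cos_mul_sub_left, sinProdMean₃_cos_mul_sub_mid]
  simp only [hJ₀, ← add_mul, ← sub_mul, mul_assoc, sq]

theorem stmt_11 (a : ℝ) (nR : ℕ) (hR : 1 ≤ nR) :
    E6 (fun θ₁ φ₁ θ₂ φ₂ θ₃ φ₃ =>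
      (∑ s ∈ Finset.Icc 1 (nR - 1), ((nR : ℝ) - s) *
        Real.cos ((s : ℝ) * a *
          (Real.sin θ₁ * Real.sin φ₁ - Real.sin θ₃ * Real.sin φ₃))) *
      (∑ s ∈ Finset.Icc 1 (nR - 1), ((nR : ℝ) - s) *
        Real.cos ((s : ℝ) * a *
          (Real.sin θ₂ * Real.sin φ₂ - Real.sin θ₃ * Real.sin φ₃)))) -
    E6 (fun θ₁ φ₁ _θ₂ _φ₂ θ₃ φ₃ =>
      ∑ s ∈ Finset.Icc 1 (nR - 1), ((nR : ℝ) - s) *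
        Real.cos ((s : ℝ) * a *
          (Real.sin θ₁ * Real.sin φ₁ - Real.sin θ₃ * Real.sin φ₃))) *
    E6 (fun _θ₁ _φ₁ θ₂ φ₂ θ₃ φ₃ =>
      ∑ s ∈ Finset.Icc 1 (nR - 1), ((nR : ℝ) - s) *
        Real.cos ((s : ℝ) * a *
          (Real.sin θ₂ * Real.sin φ₂ - Real.sin θ₃ * Real.sin φ₃)))
    = (∑ s₂ ∈ Finset.Icc 1 (nR - 1), ∑ s₁ ∈ Finset.Icc 1 (nR - 1),
        ((nR : ℝ) - s₁) * ((nR : ℝ) - s₂) *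
          ((J₀ ((s₁ : ℝ) * a / 2)) ^ 2 * (J₀ ((s₂ : ℝ) * a / 2)) ^ 2 / 2) *
          ((J₀ (((s₁ : ℝ) + (s₂ : ℝ)) * a / 2)) ^ 2 +
           (J₀ (|(s₁ : ℝ) - (s₂ : ℝ)| * a / 2)) ^ 2)) -
      (∑ s ∈ Finset.Icc 1 (nR - 1), ((nR : ℝ) - s) * (J₀ ((s : ℝ) * a / 2)) ^ 4) ^ 2 :=
  stmt_11_general a nR
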